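/- Grouping identity for entropy change prediction: for a string m and pairwise distinct letters α, β, γ, the number of occurrences of β in T(m) where T = GCT(αβ↔αγ) can be computed as: (occurrences of β in m not immediately preceded by α) + (occurrences of αγ in m). -/
import Mathlib


/-- Simultaneous digram swap `αβ ↔ αγ` (well-defined when `α ∉ {β, γ}`,
since then occurrences of `αβ` and `αγ` cannot overlap). -/
def gct {A : Type*} [DecidableEq A] (α β γ : A) : List A → List A
  | [] => []
  | [a] => [a]
  | a :: b :: l =>
    if a = α ∧ b = β then a :: γ :: gct α β γ l
    else if a = α ∧ b = γ then a :: β :: gct α β γ l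
    else a :: gct α β γ (b :: l)
termination_by l => l.length

/-- Number of (possibly overlapping) occurrences of the digram `ab` in a list. -/
def countDigram {A : Type*} [DecidableEq A] (a b : A) : List A → ℕ
  | [] => 0
  | [_] => 0
  | x :: y :: l => (if x = a ∧ y = b then 1 else 0) + countDigram a b (y :: l)

lemma countDigram_cons_ne {A : Type*} [DecidableEq A] (a b x : A) (h : x ≠ a)
    (l : List A) : countDigram a b (x :: l) = countDigram a b l := by
  cases l with
  | nil => simp [countDigram]
  | cons y l => simp [countDigram, h]

/-- Balance lemma: applying the swap trades each `αβ` for an `αγ` and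
vice versa, so the count of `β` changes by `#αγ - #αβ`. -/
lemma gct_balance {A : Type*} [DecidableEq A] (α β γ : A)
    (hαβ : α ≠ β) (hαγ : α ≠ γ) (hβγ : β ≠ γ) :
    ∀ m : List A, (gct α β γ m).count β + countDigram α β m
      = m.count β + countDigram α γ m
  | [] => by simp [gct, countDigram]
  | [a] => by simp [gct, countDigram]
  | a :: b :: l => by
    by_cases h1 : a = α ∧ b = β
    · have ih := gct_balance α β γ hαβ hαγ hβγ l
      rw [gct, if_pos h1]
      simp only [h1.1, h1.2]
      simp [countDigram, countDigram_cons_ne α β β hαβ.symm,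
        countDigram_cons_ne α γ β hαβ.symm, List.count_cons, hαβ, hβγ,
        Ne.symm hαβ, Ne.symm hβγ]
      omega
    · by_cases h2 : a = α ∧ b = γ
      · have ih := gct_balance α β γ hαβ hαγ hβγ l
        rw [gct, if_neg h1, if_pos h2]
        simp only [h2.1, h2.2]
        simp [countDigram, countDigram_cons_ne α β γ hαγ.symm,
          countDigram_cons_ne α γ γ hαγ.symm, List.count_cons, hαβ, hβγ,
          Ne.symm hαβ, Ne.symm hβγ]
        omega
      · have ih := gct_balance α β γ hαβ hαγ hβγ (b :: l)
        rw [gct, if_neg h1, if_neg h2]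
        simp only [countDigram, if_neg h1, if_neg h2, List.count_cons,
          beq_iff_eq] at ih ⊢
        omega
termination_by m => m.length
decreasing_by all_goals (simp; try omega)

/-- Count of occurrences of `β` in `l` not preceded by `α`, where `p` is the
letter just before `l`. -/
def nbA {A : Type*} [DecidableEq A] (α β : A) (p : A) : List A → ℕ
  | [] => 0
  | y :: l => (if y = β ∧ p ≠ α then 1 else 0) + nbA α β y l

lemma sum_nbA {A : Type*} [DecidableEq A] (α β : A) :
    ∀ (l : List A) (x : A),
    (∑ i ∈ Finset.range l.length,
      if l[i]? = some β ∧ (x :: l)[i]? ≠ some α then 1 else 0) = nbA α β x l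
  | [], x => by simp [nbA]
  | y :: l, x => by
    rw [List.length_cons, Finset.sum_range_succ']
    simp only [List.getElem?_cons_succ, List.getElem?_cons_zero]
    rw [sum_nbA α β l y]
    simp only [nbA, ne_eq, Option.some.injEq, add_comm]

lemma nbA_add {A : Type*} [DecidableEq A] (α β : A) (hαβ : α ≠ β) :
    ∀ (l : List A) (p : A),
    nbA α β p l + countDigram α β (p :: l) = l.count β
  | [], p => by simp [nbA, countDigram]
  | y :: l, p => by
    have ih := nbA_add α β hαβ l y
    simp only [nbA, countDigram, List.count_cons, beq_iff_eq]
    rcases eq_or_ne y β with rfl | hy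
    · rcases eq_or_ne p α with rfl | hp
      · rw [if_neg (by tauto), if_pos ⟨rfl, rfl⟩, if_pos rfl]; omega
      · rw [if_pos ⟨rfl, hp⟩, if_neg (by tauto), if_pos rfl]; omega
    · rw [if_neg (by tauto), if_neg (by tauto), if_neg hy]; omega

lemma filter_card_eq {A : Type*} [DecidableEq A] (α β : A) (hαβ : α ≠ β)
    (m : List A) :
    ((Finset.range m.length).filter
        (fun i => m[i]? = some β ∧ (i = 0 ∨ m[i - 1]? ≠ some α))).card
      + countDigram α β m = m.count β := by
  cases m with
  | nil => simp [countDigram]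
  | cons x l =>
    rw [Finset.card_filter, List.length_cons, Finset.sum_range_succ']
    have hs : ∀ i : ℕ, ((if (x :: l)[i + 1]? = some β ∧
        (i + 1 = 0 ∨ (x :: l)[i + 1 - 1]? ≠ some α) then 1 else 0) : ℕ)
        = if (l[i]? = some β ∧ (x :: l)[i]? ≠ some α) then 1 else 0 := by
      intro i
      simp [List.getElem?_cons_succ]
    simp only [hs]
    rw [sum_nbA α β l x]
    have h2 := nbA_add α β hαβ l x
    simp only [List.getElem?_cons_zero, Option.some.injEq, true_or, and_true]
    rw [List.count_cons]
    simp only [beq_iff_eq]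
    omega

/-- Grouping identity: the number of occurrences of `β` in `T(m)`,
`T = GCT(αβ↔αγ)`, equals the number of occurrences of `β` in `m` not
immediately preceded by `α`, plus the number of occurrences of `αγ` in `m`. -/
theorem gct_count_beta_grouping {A : Type*} [DecidableEq A] (α β γ : A)
    (hαβ : α ≠ β) (hαγ : α ≠ γ) (hβγ : β ≠ γ) (m : List A) :
    (gct α β γ m).count β =
      ((Finset.range m.length).filter
          (fun i => m[i]? = some β ∧ (i = 0 ∨ m[i - 1]? ≠ some α))).card
        + countDigram α γ m := by
  have h1 := gct_balance α β γ hαβ hαγ hβγ m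
  have h2 := filter_card_eq α β hαβ m
  omega
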